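/- Let X₁,…,Xₙ ∈ ℝ^p, X̄ := (1/n) Σᵢ Xᵢ, and S := (1/n) Σᵢ (Xᵢ − X̄)(Xᵢ − X̄)ᵀ. Let u₁,…,u_q ∈ ℝ^p be orthonormal eigenvectors of S with S uⱼ = λⱼ uⱼ, where λ₁ ≥ … ≥ λ_q are the q largest eigenvalues of S (counted with multiplicity), and let B* := [u₁ … u_q] be the p×q matrix with these columns. Then B* maximizes the PCA criterion: for every real p×q matrix B with BᵀB = I_q, Σᵢ₌₁ⁿ (Xᵢ − X̄)ᵀ B Bᵀ (Xᵢ − X̄) ≤ Σᵢ₌₁ⁿ (Xᵢ − X̄)ᵀ B* B*ᵀ (Xᵢ − X̄), and the maximal value equals n(λ₁ + … + λ_q). -/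

import Mathlib

/-!
For the centred data `vᵢ = Xᵢ - X̄` we have `Σᵢ vᵢ vᵢᵀ = n S`, so the criterion equals
`n · tr (Bᵀ S B)`. Diagonalising `S = U Λ Uᵀ` and putting `M = Uᵀ B`, which again has orthonormal
columns, gives `tr (Bᵀ S B) = Σₖ λₖ cₖ` with `cₖ = (M Mᵀ)ₖₖ` the diagonal of a rank-`q` orthogonal
projection: `0 ≤ cₖ ≤ 1` and `Σₖ cₖ = q`. For nonincreasing `λ` such a weighted sum is largest
when the weight sits on the first `q` indices (compare both weightings against the threshold
`λ_{q+1}`), giving `λ₁ + ⋯ + λ_q`, and this value is attained by the eigenvectors `B*`.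
-/

open Matrix Finset

theorem Fin.filter_val_lt_eq_map_castLEEmb {p q : ℕ} (hq : q ≤ p) :
    univ.filter (fun k : Fin p => (k : ℕ) < q) = univ.map (Fin.castLEEmb hq) := by
  ext k
  simp only [mem_filter, mem_univ, true_and, mem_map, Fin.castLEEmb_apply]
  exact ⟨fun hk => ⟨⟨k, hk⟩, rfl⟩, fun ⟨j, hj⟩ => hj ▸ j.isLt⟩

theorem Fin.natCast_smul_inv_natCast_smul_sum {K M : Type*} [DivisionRing K] [CharZero K]
    [AddCommMonoid M] [Module K M] {n : ℕ} (f : Fin n → M) :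
    (n : K) • ((n : K)⁻¹ • ∑ i, f i) = ∑ i, f i := by
  rcases Nat.eq_zero_or_pos n with rfl | hn
  · simp
  · exact smul_inv_smul₀ (Nat.cast_ne_zero.2 hn.ne') _

theorem Finset.sum_mul_le_sum_mul_of_threshold {ι : Type*} [Fintype ι] {R : Type*}
    [CommRing R] [LinearOrder R] [IsStrictOrderedRing R] {lam c d : ι → R} (t : R)
    (hcd : ∑ k, c k = ∑ k, d k) (ht : ∀ k, (lam k - t) * (c k - d k) ≤ 0) :
    ∑ k, lam k * c k ≤ ∑ k, lam k * d k := by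
  have hsplit : ∑ k, lam k * c k - ∑ k, lam k * d k
      = ∑ k, (lam k - t) * (c k - d k) + t * (∑ k, c k - ∑ k, d k) := by
    simp only [mul_sub, sub_mul, sum_sub_distrib, mul_sum]
    ring
  have := sum_nonpos fun k (_ : k ∈ univ) => ht k
  rw [hcd, sub_self, mul_zero, add_zero] at hsplit
  linarith

theorem Antitone.sum_mul_le_sum_castLE {R : Type*}
    [CommRing R] [LinearOrder R] [IsStrictOrderedRing R] {p q : ℕ} (hq : q ≤ p)
    {lam : Fin p → R} (hlam : Antitone lam) {c : Fin p → R}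
    (hc0 : ∀ k, 0 ≤ c k) (hc1 : ∀ k, c k ≤ 1) (hsum : ∑ k, c k = q) :
    ∑ k, lam k * c k ≤ ∑ j : Fin q, lam (Fin.castLE hq j) := by
  obtain ⟨t, ht_top, ht_bot⟩ :
      ∃ t, (∀ k : Fin p, (k : ℕ) < q → t ≤ lam k) ∧ ∀ k : Fin p, q ≤ k → lam k ≤ t := by
    by_cases h : q < p
    · exact ⟨lam ⟨q, h⟩, fun k hk => hlam (Fin.le_def.2 hk.le),
        fun k hk => hlam (Fin.le_def.2 hk)⟩
    · obtain ⟨t, ht⟩ := (Set.finite_range lam).bddBelow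
      exact ⟨t, fun k _ => ht ⟨k, rfl⟩, fun k hk => absurd k.isLt (by omega)⟩
  set d : Fin p → R := fun k => if (k : ℕ) < q then 1 else 0
  have hfilter := Fin.filter_val_lt_eq_map_castLEEmb hq
  have hd : ∀ f : Fin p → R, ∑ k, f k * d k = ∑ j : Fin q, f (Fin.castLE hq j) := fun f => by
    simp only [d, mul_ite, mul_one, mul_zero, ← sum_filter, hfilter, sum_map, Fin.castLEEmb_apply]
  calc ∑ k, lam k * c k ≤ ∑ k, lam k * d k := by
        refine sum_mul_le_sum_mul_of_threshold t ?_ fun k => ?_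
        · simpa [hsum] using (hd fun _ => 1).symm
        · by_cases hk : (k : ℕ) < q
          · simp only [d, if_pos hk]
            exact mul_nonpos_of_nonneg_of_nonpos (by linarith [ht_top k hk]) (by linarith [hc1 k])
          · simp only [d, if_neg hk, sub_zero]
            exact mul_nonpos_of_nonpos_of_nonneg (by linarith [ht_bot k (by omega)]) (hc0 k)
    _ = ∑ j : Fin q, lam (Fin.castLE hq j) := hd lam

namespace Matrix

variable {m n R : Type*} [Fintype n]

section OrthonormalColumns

variable [CommRing R] [LinearOrder R] [IsStrictOrderedRing R] {M : Matrix m n R}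

theorem mul_transpose_apply_self_nonneg (M : Matrix m n R) (k : m) : 0 ≤ (M * Mᵀ) k k :=
  sum_nonneg fun j _ => mul_self_nonneg (M k j)

/-- `P = M * Mᵀ` is a symmetric idempotent, so `P k k = ∑ j, P k j ^ 2 ≥ P k k ^ 2`. -/
theorem mul_transpose_apply_self_le_one [Fintype m] [DecidableEq n] (hM : Mᵀ * M = 1) (k : m) :
    (M * Mᵀ) k k ≤ 1 := by
  set P := M * Mᵀ
  have hsymm : Pᵀ = P := by rw [transpose_mul, transpose_transpose]
  have hidem : P * P = P := by
    simp only [P, Matrix.mul_assoc, ← Matrix.mul_assoc Mᵀ, hM, Matrix.one_mul]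
  have hsq : P k k = ∑ j, P k j * P k j := by
    conv_lhs => rw [← hidem]
    exact sum_congr rfl fun j _ => congrArg (P k j * ·) (congrFun (congrFun hsymm k) j)
  have hle : P k k * P k k ≤ P k k :=
    hsq ▸ single_le_sum (f := fun j => P k j * P k j) (fun j _ => mul_self_nonneg _) (mem_univ k)
  nlinarith [mul_transpose_apply_self_nonneg M k]

end OrthonormalColumns

theorem sum_mul_transpose_apply_self [Fintype m] [DecidableEq n] [CommSemiring R]
    {M : Matrix m n R} (hM : Mᵀ * M = 1) :
    ∑ k, (M * Mᵀ) k k = Fintype.card n := by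
  change trace (M * Mᵀ) = _
  rw [trace_mul_comm, hM, trace_one]

theorem trace_transpose_mul_diagonal_mul [Fintype m] [DecidableEq m] [CommSemiring R]
    (M : Matrix m n R) (d : m → R) :
    trace (Mᵀ * diagonal d * M) = ∑ k, d k * (M * Mᵀ) k k := by
  rw [trace_mul_comm, ← Matrix.mul_assoc, trace]
  simp only [diag_apply, mul_diagonal, mul_comm]

theorem trace_mul_mul_transpose [Fintype m] [CommSemiring R] (W : Matrix n m R)
    (A : Matrix m m R) :
    trace (W * A * Wᵀ) = ∑ j, W j ⬝ᵥ (A *ᵥ W j) := by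
  simp only [trace, diag_apply, Matrix.mul_assoc, mul_apply, transpose_apply, dotProduct, mulVec]
theorem sum_dotProduct_mulVec_eq_trace_mul_sum_vecMulVec {ι : Type*} [Fintype ι] [Fintype m]
    [CommSemiring R] (v : ι → m → R) (A : Matrix m m R) :
    ∑ i, v i ⬝ᵥ (A *ᵥ v i) = trace (A * ∑ i, vecMulVec (v i) (v i)) := by
  simp only [mul_sum, trace_sum, mul_vecMulVec, trace_vecMulVec, dotProduct_comm]

theorem IsHermitian.trace_transpose_mul_mul_le_sum_eigenvalues {p q : ℕ} (hq : q ≤ p)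
    {S : Matrix (Fin p) (Fin p) ℝ} (hS : S.IsHermitian) (hmono : Antitone hS.eigenvalues)
    {B : Matrix (Fin p) (Fin q) ℝ} (hB : Bᵀ * B = 1) :
    trace (Bᵀ * S * B) ≤ ∑ j : Fin q, hS.eigenvalues (Fin.castLE hq j) := by
  set U : Matrix (Fin p) (Fin p) ℝ := (hS.eigenvectorUnitary : Matrix (Fin p) (Fin p) ℝ)
  have hstar : star U = Uᵀ := by rw [star_eq_conjTranspose, conjTranspose_eq_transpose_of_trivial]
  have hUUt : U * Uᵀ = 1 := hstar ▸ Unitary.mul_star_self_of_mem hS.eigenvectorUnitary.2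
  have hspec : S = U * diagonal hS.eigenvalues * Uᵀ := by
    rw [← hstar]
    exact hS.spectral_theorem
  set M := Uᵀ * B
  have hM : Mᵀ * M = 1 := by
    rw [transpose_mul, transpose_transpose, Matrix.mul_assoc, ← Matrix.mul_assoc U, hUUt,
      Matrix.one_mul, hB]
  have htrace : trace (Bᵀ * S * B) = ∑ k, hS.eigenvalues k * (M * Mᵀ) k k := by
    rw [← trace_transpose_mul_diagonal_mul]
    conv_lhs => rw [hspec]
    simp only [M, transpose_mul, transpose_transpose, Matrix.mul_assoc]
  rw [htrace]
  exact hmono.sum_mul_le_sum_castLE hq (mul_transpose_apply_self_nonneg M)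
    (mul_transpose_apply_self_le_one hM) (by simpa using sum_mul_transpose_apply_self hM)

end Matrix

theorem stmt14_general (n p q : ℕ) (hq : q ≤ p) (X : Fin n → Fin p → ℝ)
    (Xbar : Fin p → ℝ)
    (S : Matrix (Fin p) (Fin p) ℝ)
    (hSdef : S = (n : ℝ)⁻¹ • ∑ i, Matrix.vecMulVec (X i - Xbar) (X i - Xbar))
    (hS : S.IsHermitian)
    (hmono : ∀ i j : Fin p, i ≤ j → hS.eigenvalues j ≤ hS.eigenvalues i)
    (u : Fin q → Fin p → ℝ)
    (horth : ∀ j k : Fin q, u j ⬝ᵥ u k = if j = k then (1 : ℝ) else 0)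
    (heig : ∀ j : Fin q, S *ᵥ u j = hS.eigenvalues (Fin.castLE hq j) • u j)
    (Bstar : Matrix (Fin p) (Fin q) ℝ) (hBstar : Bstar = Matrix.of fun i j => u j i) :
    (∀ B : Matrix (Fin p) (Fin q) ℝ, Bᵀ * B = 1 →
        ∑ i, (X i - Xbar) ⬝ᵥ ((B * Bᵀ) *ᵥ (X i - Xbar)) ≤
          ∑ i, (X i - Xbar) ⬝ᵥ ((Bstar * Bstarᵀ) *ᵥ (X i - Xbar))) ∧
      ∑ i, (X i - Xbar) ⬝ᵥ ((Bstar * Bstarᵀ) *ᵥ (X i - Xbar)) =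
        n * ∑ j : Fin q, hS.eigenvalues (Fin.castLE hq j) := by
  have hscatter : ∑ i, vecMulVec (X i - Xbar) (X i - Xbar) = (n : ℝ) • S := by
    rw [hSdef, Fin.natCast_smul_inv_natCast_smul_sum]
  have hcrit (B : Matrix (Fin p) (Fin q) ℝ) :
      ∑ i, (X i - Xbar) ⬝ᵥ ((B * Bᵀ) *ᵥ (X i - Xbar)) = n * trace (Bᵀ * S * B) := by
    rw [sum_dotProduct_mulVec_eq_trace_mul_sum_vecMulVec, hscatter, Matrix.mul_smul, trace_smul,
      Matrix.mul_assoc, trace_mul_comm, smul_eq_mul]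
  have hBstar_trace :
      trace (Bstarᵀ * S * Bstar) = ∑ j : Fin q, hS.eigenvalues (Fin.castLE hq j) := by
    have hBstar' : Bstar = (of u)ᵀ := hBstar
    rw [hBstar', transpose_transpose, trace_mul_mul_transpose]
    refine sum_congr rfl fun j _ => ?_
    change u j ⬝ᵥ (S *ᵥ u j) = _
    rw [heig, dotProduct_smul, horth, if_pos rfl, smul_eq_mul, mul_one]
  refine ⟨fun B hB => ?_, by rw [hcrit, hBstar_trace]⟩
  rw [hcrit, hcrit, hBstar_trace]
  exact mul_le_mul_of_nonneg_left (hS.trace_transpose_mul_mul_le_sum_eigenvalues hq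
    (fun i j => hmono i j) hB) n.cast_nonneg

/-- The matrix of leading orthonormal eigenvectors of the sample covariance matrix
maximizes the PCA criterion `Σᵢ (Xᵢ − X̄)ᵀ B Bᵀ (Xᵢ − X̄)` over matrices `B` with
orthonormal columns, and the maximal value is `n(λ₁ + ⋯ + λ_q)`. -/
theorem stmt14 (n p q : ℕ) (hn : 1 ≤ n) (hq : q ≤ p) (X : Fin n → Fin p → ℝ)
    (Xbar : Fin p → ℝ) (hXbar : Xbar = (n : ℝ)⁻¹ • ∑ i, X i)
    (S : Matrix (Fin p) (Fin p) ℝ)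
    (hSdef : S = (n : ℝ)⁻¹ • ∑ i, Matrix.vecMulVec (X i - Xbar) (X i - Xbar))
    (hS : S.IsHermitian)
    (hmono : ∀ i j : Fin p, i ≤ j → hS.eigenvalues j ≤ hS.eigenvalues i)
    (u : Fin q → Fin p → ℝ)
    (horth : ∀ j k : Fin q, u j ⬝ᵥ u k = if j = k then (1 : ℝ) else 0)
    (heig : ∀ j : Fin q, S *ᵥ u j = hS.eigenvalues (Fin.castLE hq j) • u j)
    (Bstar : Matrix (Fin p) (Fin q) ℝ) (hBstar : Bstar = Matrix.of fun i j => u j i) :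
    (∀ B : Matrix (Fin p) (Fin q) ℝ, Bᵀ * B = 1 →
        ∑ i, (X i - Xbar) ⬝ᵥ ((B * Bᵀ) *ᵥ (X i - Xbar)) ≤
          ∑ i, (X i - Xbar) ⬝ᵥ ((Bstar * Bstarᵀ) *ᵥ (X i - Xbar))) ∧
      ∑ i, (X i - Xbar) ⬝ᵥ ((Bstar * Bstarᵀ) *ᵥ (X i - Xbar)) =
        n * ∑ j : Fin q, hS.eigenvalues (Fin.castLE hq j) :=
  stmt14_general n p q hq X Xbar S hSdef hS hmono u horth heig Bstar hBstar
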